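/- Let X and Y be strings over an alphabet Σ, let k ≥ 0 be an integer, and let α ≥ 1 be an integer. For i ∈ [0..k+1] and j ∈ [⌊−k/α⌋−1 .. ⌊k/α⌋+1], let d'_{i,j}, d_{i,j} ∈ ℤ ∪ {−∞} satisfy: d'_{0,0} = 0 and d'_{0,j} = −∞ for j ≠ 0; d_{i,j} = −∞ whenever d'_{i,j} = −∞ or j ∉ [⌊−k/α⌋..⌊k/α⌋]; for each i ∈ [0..k] and j ∈ [⌊−k/α⌋..⌊k/α⌋] with d'_{i,j} ≠ −∞, max_{δ=jα}^{(j+1)α−1} LCE_0^{X,Y}(d'_{i,j}, d'_{i,j}+δ) ≤ d_{i,j} − d'_{i,j} ≤ max_{δ=jα}^{(j+1)α−1} LCE_{α−1}^{X,Y}(d'_{i,j}, d'_{i,j}+δ); and d'_{i+1,j} = min(|X|, max(d_{i,j−1}, d_{i,j}+1, d_{i,j+1}+1)) for each i ∈ [0..k] and j ∈ [⌊−k/α⌋..⌊k/α⌋], with the convention min(|X|, −∞) = −∞. If ED(X[0..x), Y[0..y)) = i for some i ∈ [0..k], x ∈ [0..|X|], and y ∈ [0..|Y|], then x ≤ d_{i,j}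 for j = ⌊(y−x)/α⌋. -/

import Mathlib

/-- Hamming distance (number of mismatching positions) between two strings. -/
def HD {α : Type*} [DecidableEq α] (X Y : List α) : ℕ :=
  ((X.zip Y).filter fun p => p.1 ≠ p.2).length

/-- `LCE k X Y x y` is the largest `ℓ` with `HD (X[x..x+ℓ)) (Y[y..y+ℓ)) ≤ k`
(in particular `ℓ ≤ min (|X|-x) (|Y|-y)`) when `0 ≤ x ≤ |X|` and `0 ≤ y ≤ |Y|`,
and `0` otherwise. -/
def LCE {α : Type*} [DecidableEq α] (k : ℕ) (X Y : List α) (x y : ℤ) : ℕ :=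
  if 0 ≤ x ∧ x ≤ X.length ∧ 0 ≤ y ∧ y ≤ Y.length then
    Nat.findGreatest
      (fun ℓ => ℓ ≤ X.length - x.toNat ∧ ℓ ≤ Y.length - y.toNat ∧
        HD ((X.drop x.toNat).take ℓ) ((Y.drop y.toNat).take ℓ) ≤ k)
      (min (X.length - x.toNat) (Y.length - y.toNat))
  else 0

namespace Levenshtein

structure Cost (α β δ : Type*) where
  delete : α → δ
  insert : β → δ
  substitute : α → β → δ

def defaultCost {α : Type*} [DecidableEq α] : Cost α α ℕ where
  delete _ := 1
  insert _ := 1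
  substitute a b := if a = b then 0 else 1

def impl {α β δ : Type*} [AddZeroClass δ] [Min δ] (C : Cost α β δ) (xs : List α) (y : β)
    (d : {r : List δ // 0 < r.length}) : {r : List δ // 0 < r.length} :=
  let ⟨ds, w⟩ := d
  xs.zip (ds.zip ds.tail) |>.foldr
    (init := ⟨[ds.getLast (List.length_pos_iff_ne_nil.mp w) + C.insert y], by simp⟩)
    (fun ⟨x, d₀, d₁⟩ ⟨r, w⟩ =>
      ⟨min (C.delete x + r[0]) (min (C.insert y + d₀) (C.substitute x y + d₁)) :: r, by simp⟩)

end Levenshtein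

def suffixLevenshtein {α β δ : Type*} [AddZeroClass δ] [Min δ] (C : Levenshtein.Cost α β δ)
    (xs : List α) (ys : List β) : {r : List δ // 0 < r.length} :=
  ys.foldr
    (Levenshtein.impl C xs)
    (xs.foldr (init := ⟨[0], by simp⟩) (fun a ⟨r, w⟩ => ⟨(C.delete a + r[0]) :: r, by simp⟩))

def levenshtein {α β δ : Type*} [AddZeroClass δ] [Min δ] (C : Levenshtein.Cost α β δ)
    (xs : List α) (ys : List β) : δ :=
  let ⟨r, w⟩ := suffixLevenshtein C xs ys
  r[0]

/-- Edit (Levenshtein) distance. -/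
def ED {α : Type*} [DecidableEq α] (X Y : List α) : ℕ :=
  levenshtein Levenshtein.defaultCost X Y

section Aux
open Levenshtein
variable {α : Type*} [DecidableEq α]

lemma lev_eq_head (C : Cost α α ℕ) (xs ys : List α) :
    levenshtein C xs ys = (suffixLevenshtein C xs ys).1.headD 0 := by
  unfold levenshtein
  rcases suffixLevenshtein C xs ys with ⟨r, w⟩
  cases r with
  | nil => simp at w
  | cons v t => rfl

lemma impl_nil (C : Cost α α ℕ) (y : α) (d : {r : List ℕ // 0 < r.length}) (n : ℕ)
    (h : d.1 = [n]) : (impl C [] y d).1 = [n + C.insert y] := by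
  rcases d with ⟨l, w⟩
  subst h
  rfl

lemma impl_cons (C : Cost α α ℕ) (x : α) (xs : List α) (y : α)
    (d e : {r : List ℕ // 0 < r.length}) (d0 : ℕ) (h : d.1 = d0 :: e.1) :
    (impl C (x::xs) y d).1 = min (C.delete x + (impl C xs y e).1.headD 0)
      (min (C.insert y + d0) (C.substitute x y + e.1.headD 0)) :: (impl C xs y e).1 := by
  rcases d with ⟨l, w⟩
  rcases e with ⟨l2, w2⟩
  simp only at h
  subst h
  cases l2 with
  | nil => simp at w2
  | cons e1 es =>
    have hF : ∀ F : {r : List ℕ // 0 < r.length}, F.1[0]'F.2 = F.1.headD 0 := by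
      rintro ⟨l, hl⟩; cases l with
      | nil => simp at hl
      | cons _ _ => rfl
    simp only [impl, List.zip_cons_cons, List.tail_cons, List.foldr_cons, List.getLast_cons_cons]
    rw [hF]
    rfl

lemma suff_nil_left (C : Cost α α ℕ) (ys : List α) (h : ∀ y, C.insert y = 1) :
    (suffixLevenshtein C [] ys).1 = [ys.length] := by
  induction ys with
  | nil => rfl
  | cons y ys ih =>
    show (impl C [] y (suffixLevenshtein C [] ys)).1 = _
    rw [impl_nil C y _ _ ih, h]; simp

lemma suff_nil_right (C : Cost α α ℕ) (xs : List α) (h : ∀ x, C.delete x = 1) :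
    ∃ t, (suffixLevenshtein C xs []).1 = xs.length :: t := by
  induction xs with
  | nil => exact ⟨[], rfl⟩
  | cons x xs ih =>
    obtain ⟨t, ht⟩ := ih
    refine ⟨xs.length :: t, ?_⟩
    show (C.delete x + (suffixLevenshtein C xs []).1[0]'(suffixLevenshtein C xs []).2) :: (suffixLevenshtein C xs []).1 = _
    simp [ht, h]; omega

lemma suff_cons_left (C : Cost α α ℕ) (x : α) (xs ys : List α) :
    ∃ v, (suffixLevenshtein C (x::xs) ys).1 = v :: (suffixLevenshtein C xs ys).1 := by
  induction ys with
  | nil => exact ⟨_, rfl⟩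
  | cons y ys ih =>
    obtain ⟨v, hv⟩ := ih
    exact ⟨_, impl_cons C x xs y _ _ v hv⟩
lemma ED_nil_left (B : List α) : ED [] B = B.length := by
  induction B with
  | nil => rfl
  | cons b B ih => rw [ED, lev_eq_head, suff_nil_left _ _ (fun _ => rfl)]; rfl

lemma ED_nil_right (A : List α) : ED A [] = A.length := by
  induction A with
  | nil => rfl
  | cons b B ih =>
    obtain ⟨t, ht⟩ := suff_nil_right defaultCost (b::B) (fun _ => rfl)
    rw [ED, lev_eq_head, ht]; rfl

lemma ED_cons_cons (x y : α) (A B : List α) :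
    ED (x::A) (y::B) = min (1 + ED A (y::B))
      (min (1 + ED (x::A) B) ((if x = y then 0 else 1) + ED A B)) := by
  rw [ED, ED, ED, ED, lev_eq_head, lev_eq_head, lev_eq_head, lev_eq_head]
  obtain ⟨v, hv⟩ := suff_cons_left defaultCost x A B
  show (impl defaultCost (x::A) y (suffixLevenshtein defaultCost (x::A) B)).1.headD 0 = _
  rw [impl_cons _ x A y _ _ v hv, hv]
  rfl

lemma ED_cons_le_left (u : α) (U V : List α) : ED (u::U) V ≤ 1 + ED U V := by
  cases V with
  | nil => rw [ED_nil_right, ED_nil_right]; simp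
  | cons v V => rw [ED_cons_cons]; omega

lemma ED_cons_le_right (v : α) (U V : List α) : ED U (v::V) ≤ 1 + ED U V := by
  cases U with
  | nil => rw [ED_nil_left, ED_nil_left]; simp
  | cons u U => rw [ED_cons_cons]; omega

lemma ED_le_cons_right (v : α) (U V : List α) : ED U V ≤ 1 + ED U (v::V) := by
  induction U generalizing v V with
  | nil => rw [ED_nil_left, ED_nil_left]; simp; omega
  | cons u U ih =>
    have h1 := ED_cons_le_left u U V
    have h2 := ih v V
    rw [ED_cons_cons]
    omega

lemma ED_le_cons_left (u : α) (U V : List α) : ED U V ≤ 1 + ED (u::U) V := by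
  induction V generalizing u U with
  | nil => rw [ED_nil_right, ED_nil_right]; simp; omega
  | cons v V ih =>
    have h1 := ED_cons_le_right v U V
    have h2 := ih u U
    rw [ED_cons_cons]
    omega

lemma ED_cons_cons_le (x y : α) (A B : List α) : ED (x::A) (y::B) ≤ 1 + ED A B := by
  rw [ED_cons_cons]; split <;> omega

lemma ED_eq_zero_iff (A B : List α) : ED A B = 0 ↔ A = B := by
  induction A generalizing B with
  | nil => cases B <;> simp [ED_nil_left]
  | cons a A ih =>
    cases B with
    | nil => simp [ED_nil_right]
    | cons b B =>
      rw [ED_cons_cons]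
      constructor
      · intro h
        by_cases hab : a = b
        · simp only [if_pos hab] at h
          have : ED A B = 0 := by omega
          rw [hab, (ih B).1 this]
        · simp only [if_neg hab] at h; omega
      · intro h
        injection h with h1 h2
        subst h1; subst h2
        simp [(ih A).2 rfl]

lemma ED_length_le (A B : List α) :
    A.length ≤ B.length + ED A B ∧ B.length ≤ A.length + ED A B := by
  induction A generalizing B with
  | nil => rw [ED_nil_left]; simp
  | cons a A ih =>
    induction B with
    | nil => rw [ED_nil_right]; simp
    | cons b B ihB =>
      have h1 := ih (b::B)
      have h2 := ih B
      rw [ED_cons_cons]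
      simp only [List.length_cons] at *
      omega

lemma HD_self (L : List α) : HD L L = 0 := by
  induction L with
  | nil => rfl
  | cons a L ih => simpa [HD] using ih

lemma LCE_zero_ge (X Y : List α) (w w' ℓ : ℕ) (hx : w + ℓ ≤ X.length)
    (hy : w' + ℓ ≤ Y.length) (hEq : (X.drop w).take ℓ = (Y.drop w').take ℓ) :
    ℓ ≤ LCE 0 X Y w w' := by
  unfold LCE
  rw [if_pos (by refine ⟨by positivity, by exact_mod_cast (by omega : w ≤ X.length),
    by positivity, by exact_mod_cast (by omega : w' ≤ Y.length)⟩)]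
  apply Nat.le_findGreatest
  · simp only [Int.toNat_natCast]; omega
  · refine ⟨by simp only [Int.toNat_natCast]; omega, by simp only [Int.toNat_natCast]; omega, ?_⟩
    simp only [Int.toNat_natCast]
    rw [hEq, HD_self]

/-- Last-edit decomposition. -/
lemma ED_traceback : ∀ (n : ℕ) (A B : List α), A.length + B.length ≤ n → A ≠ B →
    ∃ A' B' s, A = A' ++ s ∧ B = B' ++ s ∧
      ((∃ A'' a₀, A' = A'' ++ [a₀] ∧ ED A'' B' + 1 ≤ ED A B) ∨
       (∃ B'' b₀, B' = B'' ++ [b₀] ∧ ED A' B'' + 1 ≤ ED A B) ∨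
       (∃ A'' B'' a₀ b₀, A' = A'' ++ [a₀] ∧ B' = B'' ++ [b₀] ∧ ED A'' B'' + 1 ≤ ED A B)) := by
  intro n
  induction n with
  | zero =>
    intro A B hlen hne
    have hA : A = [] := List.length_eq_zero_iff.1 (by omega)
    have hB : B = [] := List.length_eq_zero_iff.1 (by omega)
    exact absurd (hA.trans hB.symm) hne
  | succ n ih =>
    intro A B hlen hne
    match A, B with
    | [], B =>
      rcases B.eq_nil_or_concat' with rfl | ⟨B'', b₀, rfl⟩
      · exact absurd rfl hne
      · refine ⟨[], B'' ++ [b₀], [], by simp, by simp, Or.inr (Or.inl ⟨B'', b₀, rfl, ?_⟩)⟩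
        rw [ED_nil_left, ED_nil_left]; simp
    | (a :: A₂), [] =>
      rcases (a::A₂).eq_nil_or_concat' with h | ⟨A'', a₀, hA⟩
      · simp at h
      · refine ⟨a::A₂, [], [], by simp, by simp, Or.inl ⟨A'', a₀, hA, ?_⟩⟩
        rw [ED_nil_right, ED_nil_right]
        have : (a::A₂).length = A''.length + 1 := by rw [hA]; simp
        omega
    | (a :: A₂), (b :: B₂) =>
      by_cases hab : a = b
      · -- equal heads
        subst hab
        have hne2 : A₂ ≠ B₂ := fun h => hne (by rw [h])
        have hlen2 : A₂.length + B₂.length ≤ n := by simp at hlen; omega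
        obtain ⟨A', B', s, rfl, rfl, hc⟩ := ih A₂ B₂ hlen2 hne2
        have hge : ED (A' ++ s) (B' ++ s) ≤ ED (a :: (A' ++ s)) (a :: (B' ++ s)) := by
          rw [ED_cons_cons]
          have h1 := ED_le_cons_right a (A' ++ s) (B' ++ s)
          have h2 := ED_le_cons_left a (A' ++ s) (B' ++ s)
          simp only [if_pos rfl, if_true]
          omega
        refine ⟨a :: A', a :: B', s, rfl, rfl, ?_⟩
        rcases hc with ⟨A'', a₀, hA, hb⟩ | ⟨B'', b₀, hB, hb⟩ | ⟨A'', B'', a₀, b₀, hA, hB, hb⟩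
        · refine Or.inl ⟨a :: A'', a₀, by rw [hA]; rfl, ?_⟩
          have h3 : ED (a :: A'') (a :: B') ≤ ED A'' B' := by
            rw [ED_cons_cons]; simp only [if_pos rfl, if_true]; omega
          omega
        · refine Or.inr (Or.inl ⟨a :: B'', b₀, by rw [hB]; rfl, ?_⟩)
          have h3 : ED (a :: A') (a :: B'') ≤ ED A' B'' := by
            rw [ED_cons_cons]; simp only [if_pos rfl, if_true]; omega
          omega
        · refine Or.inr (Or.inr ⟨a :: A'', a :: B'', a₀, b₀, by rw [hA]; rfl, by rw [hB]; rfl, ?_⟩)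
          have h3 : ED (a :: A'') (a :: B'') ≤ ED A'' B'' := by
            rw [ED_cons_cons]; simp only [if_pos rfl, if_true]; omega
          omega
      · -- distinct heads
        have hmin : ED (a::A₂) (b::B₂) = 1 + ED A₂ (b::B₂) ∨
            ED (a::A₂) (b::B₂) = 1 + ED (a::A₂) B₂ ∨
            ED (a::A₂) (b::B₂) = 1 + ED A₂ B₂ := by
          rw [ED_cons_cons, if_neg hab]; omega
        simp only [List.length_cons] at hlen
        rcases hmin with hm | hm | hm
        · -- delete branch
          by_cases h2 : A₂ = b :: B₂
          · refine ⟨[a], [], b::B₂, by rw [h2]; rfl, by simp, Or.inl ⟨[], a, rfl, ?_⟩⟩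
            rw [ED_nil_left]; simp only [List.length_nil]; omega
          · obtain ⟨A', B', s, hA2, hB2, hc⟩ := ih A₂ (b::B₂) (by simp; omega) h2
            refine ⟨a :: A', B', s, by rw [hA2]; rfl, hB2, ?_⟩
            rcases hc with ⟨A'', a₀, hA, hb⟩ | ⟨B'', b₀, hB, hb⟩ | ⟨A'', B'', a₀, b₀, hA, hB, hb⟩
            · exact Or.inl ⟨a :: A'', a₀, by rw [hA]; rfl,
                by have := ED_cons_le_left a A'' B'; omega⟩
            · exact Or.inr (Or.inl ⟨B'', b₀, hB,
                by have := ED_cons_le_left a A' B''; omega⟩)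
            · exact Or.inr (Or.inr ⟨a :: A'', B'', a₀, b₀, by rw [hA]; rfl, hB,
                by have := ED_cons_le_left a A'' B''; omega⟩)
        · -- insert branch
          by_cases h2 : (a :: A₂) = B₂
          · refine ⟨[], [b], a::A₂, by simp, by rw [h2]; rfl, Or.inr (Or.inl ⟨[], b, rfl, ?_⟩)⟩
            rw [ED_nil_left]; simp only [List.length_nil]; omega
          · obtain ⟨A', B', s, hA2, hB2, hc⟩ := ih (a::A₂) B₂ (by simp; omega) h2
            refine ⟨A', b :: B', s, hA2, by rw [hB2]; rfl, ?_⟩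
            rcases hc with ⟨A'', a₀, hA, hb⟩ | ⟨B'', b₀, hB, hb⟩ | ⟨A'', B'', a₀, b₀, hA, hB, hb⟩
            · exact Or.inl ⟨A'', a₀, hA,
                by have := ED_cons_le_right b A'' B'; omega⟩
            · exact Or.inr (Or.inl ⟨b :: B'', b₀, by rw [hB]; rfl,
                by have := ED_cons_le_right b A' B''; omega⟩)
            · exact Or.inr (Or.inr ⟨A'', b :: B'', a₀, b₀, hA, by rw [hB]; rfl,
                by have := ED_cons_le_right b A'' B''; omega⟩)
        · -- substitute branch
          by_cases h2 : A₂ = B₂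
          · refine ⟨[a], [b], A₂, rfl, by rw [h2]; rfl, Or.inr (Or.inr ⟨[], [], a, b, rfl, rfl, ?_⟩)⟩
            rw [ED_nil_left]; simp only [List.length_nil]; omega
          · obtain ⟨A', B', s, hA2, hB2, hc⟩ := ih A₂ B₂ (by omega) h2
            refine ⟨a :: A', b :: B', s, by rw [hA2]; rfl, by rw [hB2]; rfl, ?_⟩
            rcases hc with ⟨A'', a₀, hA, hb⟩ | ⟨B'', b₀, hB, hb⟩ | ⟨A'', B'', a₀, b₀, hA, hB, hb⟩
            · exact Or.inl ⟨a :: A'', a₀, by rw [hA]; rfl,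
                by have := ED_cons_cons_le a b A'' B'; omega⟩
            · exact Or.inr (Or.inl ⟨b :: B'', b₀, by rw [hB]; rfl,
                by have := ED_cons_cons_le a b A' B''; omega⟩)
            · exact Or.inr (Or.inr ⟨a :: A'', b :: B'', a₀, b₀, by rw [hA]; rfl, by rw [hB]; rfl,
                by have := ED_cons_cons_le a b A'' B''; omega⟩)

end Aux

theorem stmt5 {α : Type*} [DecidableEq α] (X Y : List α) (k a : ℕ) (ha : 1 ≤ a)
    (d' d : ℕ → ℤ → WithBot ℤ)
    (h00 : d' 0 0 = 0)
    (h0j : ∀ j : ℤ, Int.fdiv (-(k : ℤ)) a - 1 ≤ j → j ≤ Int.fdiv (k : ℤ) a + 1 →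
      j ≠ 0 → d' 0 j = ⊥)
    (hbot : ∀ i ≤ k + 1, ∀ j : ℤ, Int.fdiv (-(k : ℤ)) a - 1 ≤ j → j ≤ Int.fdiv (k : ℤ) a + 1 →
      (d' i j = ⊥ ∨ j < Int.fdiv (-(k : ℤ)) a ∨ Int.fdiv (k : ℤ) a < j) → d i j = ⊥)
    (hlce : ∀ i ≤ k, ∀ j : ℤ, Int.fdiv (-(k : ℤ)) a ≤ j → j ≤ Int.fdiv (k : ℤ) a →
      ∀ v : ℤ, d' i j = (v : WithBot ℤ) →
        ((v + (((Finset.Icc (j * a) ((j + 1) * a - 1)).sup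
            (fun δ => LCE 0 X Y v (v + δ)) : ℕ) : ℤ) : ℤ) : WithBot ℤ) ≤ d i j ∧
        d i j ≤ ((v + (((Finset.Icc (j * a) ((j + 1) * a - 1)).sup
            (fun δ => LCE (a - 1) X Y v (v + δ)) : ℕ) : ℤ) : ℤ) : WithBot ℤ))
    (hstep : ∀ i ≤ k, ∀ j : ℤ, Int.fdiv (-(k : ℤ)) a ≤ j → j ≤ Int.fdiv (k : ℤ) a →
      d' (i + 1) j = min ((X.length : ℤ) : WithBot ℤ)
        (max (d i (j - 1)) (max (d i j + 1) (d i (j + 1) + 1)))) :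
    ∀ i ≤ k, ∀ x ≤ X.length, ∀ y ≤ Y.length,
      ED (X.take x) (Y.take y) = i →
        ((x : ℤ) : WithBot ℤ) ≤ d i (Int.fdiv ((y : ℤ) - (x : ℤ)) a) := by
  have hA : (0:ℤ) < (a:ℤ) := by exact_mod_cast ha
  have hmul : ∀ t : ℤ, (t.fdiv a) * a ≤ t := by
    intro t
    rw [Int.fdiv_eq_ediv_of_nonneg _ hA.le]
    have h1 := Int.mul_ediv_add_emod t a
    have h2 := Int.emod_nonneg t (ne_of_gt hA)
    nlinarith [Int.mul_ediv_add_emod t a]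
  have hlt : ∀ t : ℤ, t < (t.fdiv a + 1) * a := fun t => Int.lt_fdiv_add_one_mul_self t hA
  have hmono : ∀ s t : ℤ, s ≤ t → s.fdiv a ≤ t.fdiv a := by
    intro s t h
    rw [Int.fdiv_eq_ediv_of_nonneg _ hA.le, Int.fdiv_eq_ediv_of_nonneg _ hA.le]
    exact Int.ediv_le_ediv hA h
  have hadd : ∀ t : ℤ, (t + a).fdiv a = t.fdiv a + 1 := by
    intro t
    rw [Int.fdiv_eq_ediv_of_nonneg _ hA.le, Int.fdiv_eq_ediv_of_nonneg _ hA.le,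
      ← Int.add_mul_ediv_right t 1 (ne_of_gt hA), one_mul]
  have hcoe_succ : ∀ (c : ℕ) (u : WithBot ℤ), ((c:ℤ) : WithBot ℤ) ≤ u →
      (((c+1:ℕ):ℤ) : WithBot ℤ) ≤ u + 1 := by
    intro c u h
    have he : (((c+1:ℕ):ℤ) : WithBot ℤ) = ((c:ℤ):WithBot ℤ) + 1 := by push_cast; ring_nf
    rw [he]
    exact add_le_add_left h 1
  suffices H : ∀ i, i ≤ k → ∀ x, x ≤ X.length → ∀ y, y ≤ Y.length →
      ED (X.take x) (Y.take y) ≤ i →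
      ((x : ℤ) : WithBot ℤ) ≤ d i (Int.fdiv ((y : ℤ) - (x : ℤ)) a) by
    intro i hi x hx y hy hED
    exact H i hi x hx y hy hED.le
  intro i
  induction i with
  | zero =>
    intro _ x hx y hy hED
    have hED0 : ED (X.take x) (Y.take y) = 0 := by omega
    have hAB : X.take x = Y.take y := (ED_eq_zero_iff _ _).1 hED0
    have hxy : x = y := by
      have := congrArg List.length hAB
      simp only [List.length_take] at this
      omega
    subst hxy
    have ht0 : (x:ℤ) - (x:ℤ) = 0 := by ring
    rw [ht0, Int.zero_fdiv]
    have hb1 : Int.fdiv (-(k : ℤ)) a ≤ 0 := by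
      have := hmono (-(k:ℤ)) 0 (by omega)
      simpa using this
    have hb2 : (0:ℤ) ≤ Int.fdiv (k : ℤ) a := by
      have := hmono 0 (k:ℤ) (by omega)
      simpa using this
    have h00' : d' 0 0 = ((0:ℤ) : WithBot ℤ) := by simpa using h00
    have hd00 := (hlce 0 (Nat.zero_le k) 0 hb1 hb2 0 h00').1
    refine le_trans ?_ hd00
    rw [WithBot.coe_le_coe]
    have hmem : (0:ℤ) ∈ Finset.Icc ((0:ℤ) * a) ((0 + 1) * a - 1) := by
      rw [Finset.mem_Icc]
      constructor <;> [simp; omega]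
    have hle : x ≤ LCE 0 X Y ((0:ℤ)) ((0:ℤ) + 0) := by
      have : x ≤ LCE 0 X Y ((0:ℕ):ℤ) ((0:ℕ):ℤ) := by
        apply LCE_zero_ge X Y 0 0 x (by omega) (by omega)
        simpa using hAB
      simpa using this
    have hsup := Finset.le_sup (f := fun δ => LCE 0 X Y 0 (0 + δ)) hmem
    have := le_trans hle hsup
    omega
  | succ i ih =>
    intro hik x hx y hy hED
    set A := X.take x with hAdef
    set B := Y.take y with hBdef
    have hlA : A.length = x := by simp [hAdef]; omega
    have hlB : B.length = y := by simp [hBdef]; omega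
    have hlen := ED_length_le A B
    set t : ℤ := (y:ℤ) - (x:ℤ) with htdef
    set j : ℤ := t.fdiv a with hjdef
    have hb1 : Int.fdiv (-(k : ℤ)) a ≤ j := hmono _ _ (by omega)
    have hb2 : j ≤ Int.fdiv (k : ℤ) a := hmono _ _ (by omega)
    have key : ∀ (x₀ y₀ : ℕ), x₀ ≤ x → y₀ ≤ y → x₀ + y = y₀ + x →
        (X.drop x₀).take (x - x₀) = (Y.drop y₀).take (y - y₀) →
        ((x₀:ℤ) : WithBot ℤ) ≤ max (d i (j-1)) (max (d i j + 1) (d i (j+1) + 1)) →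
        ((x:ℤ) : WithBot ℤ) ≤ d (i+1) j := by
      intro x₀ y₀ hx₀ hy₀ hdiag hmatch hmax
      have hstepj := hstep i (by omega) j hb1 hb2
      have hv1 : ((x₀:ℤ) : WithBot ℤ) ≤ d' (i+1) j := by
        rw [hstepj]
        refine le_min ?_ hmax
        rw [WithBot.coe_le_coe]
        exact_mod_cast hx₀.trans hx
      have hv2 : d' (i+1) j ≤ ((X.length : ℤ) : WithBot ℤ) := by
        rw [hstepj]; exact min_le_left _ _
      have hne : d' (i+1) j ≠ ⊥ :=
        ne_bot_of_gt (lt_of_lt_of_le (WithBot.bot_lt_coe _) hv1)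
      obtain ⟨v, hv⟩ := WithBot.ne_bot_iff_exists.1 hne
      rw [← hv] at hv1 hv2
      rw [WithBot.coe_le_coe] at hv1 hv2
      have hlow := (hlce (i+1) hik j hb1 hb2 v hv.symm).1
      rcases le_or_gt (x:ℤ) v with hvx | hvx
      · refine le_trans ?_ hlow
        rw [WithBot.coe_le_coe]
        have : (0:ℤ) ≤ ((Finset.Icc (j * a) ((j + 1) * a - 1)).sup
            (fun δ => LCE 0 X Y v (v + δ)) : ℕ) := by positivity
        omega
      · have hv0 : (0:ℤ) ≤ v := le_trans (by positivity) hv1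
        obtain ⟨w, rfl⟩ := Int.eq_ofNat_of_zero_le hv0
        have hwx : w < x := by exact_mod_cast hvx
        have hwx₀ : x₀ ≤ w := by exact_mod_cast hv1
        set w' : ℕ := y - (x - w) with hw'def
        have hw' : ((w':ℕ):ℤ) = (w:ℤ) + t := by rw [htdef]; omega
        have hmem : t ∈ Finset.Icc (j * a) ((j + 1) * a - 1) := by
          rw [Finset.mem_Icc]
          exact ⟨hmul t, Int.le_sub_one_of_lt (hlt t)⟩
        have hseg : (X.drop w).take (x - w) = (Y.drop w').take (y - w') := by
          have h1 := congrArg (List.drop (w - x₀)) hmatch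
          rw [List.drop_take, List.drop_take, List.drop_drop, List.drop_drop] at h1
          have e1 : x₀ + (w - x₀) = w := by omega
          have e2 : x - x₀ - (w - x₀) = x - w := by omega
          have e3 : y₀ + (w - x₀) = w' := by omega
          have e4 : y - y₀ - (w - x₀) = y - w' := by omega
          rw [e1, e2, e3, e4] at h1
          exact h1
        have hLCE : x - w ≤ LCE 0 X Y ((w:ℕ):ℤ) (((w:ℕ):ℤ) + t) := by
          rw [show ((w:ℕ):ℤ) + t = ((w':ℕ):ℤ) from hw'.symm]
          have e : y - w' = x - w := by omega
          rw [e] at hseg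
          exact LCE_zero_ge X Y w w' (x - w) (by omega) (by omega) hseg
        have hsup := Finset.le_sup (f := fun δ => LCE 0 X Y ((w:ℕ):ℤ) (((w:ℕ):ℤ) + δ)) hmem
        refine le_trans ?_ hlow
        rw [WithBot.coe_le_coe]
        have : LCE 0 X Y ((w:ℕ):ℤ) (((w:ℕ):ℤ) + t) ≤
            ((Finset.Icc (j * a) ((j + 1) * a - 1)).sup
              (fun δ => LCE 0 X Y ((w:ℕ):ℤ) (((w:ℕ):ℤ) + δ)) : ℕ) := hsup
        omega
    have hXtake : ∀ m ≤ x, A.take m = X.take m := by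
      intro m hm; rw [hAdef, List.take_take, min_eq_left hm]
    have hYtake : ∀ m ≤ y, B.take m = Y.take m := by
      intro m hm; rw [hBdef, List.take_take, min_eq_left hm]
    by_cases hle : ED A B ≤ i
    · have hid := ih (by omega) x hx y hy hle
      apply key x y le_rfl le_rfl (by omega) (by simp)
      have h1 : ((x:ℤ) : WithBot ℤ) ≤ d i j + 1 :=
        le_trans hid (le_add_of_nonneg_right (by norm_num))
      exact le_trans h1 (le_trans (le_max_left _ _) (le_max_right _ _))
    · have heq : ED A B = i + 1 := by omega
      have hneAB : A ≠ B := by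
        intro h
        rw [(ED_eq_zero_iff A B).2 h] at heq
        omega
      obtain ⟨A', B', s, hA', hB', hcases⟩ :=
        ED_traceback (A.length + B.length) A B le_rfl hneAB
      set x₀ := A'.length with hx₀def
      set y₀ := B'.length with hy₀def
      have hsx : x₀ + s.length = x := by rw [← hlA, hA']; simp; exact hx₀def
      have hsy : y₀ + s.length = y := by rw [← hlB, hB']; simp; exact hy₀def
      have hmatch : (X.drop x₀).take (x - x₀) = (Y.drop y₀).take (y - y₀) := by
        have h1 : List.drop x₀ A = s := by rw [hA']; exact List.drop_left
        have h2 : List.drop y₀ B = s := by rw [hB']; exact List.drop_left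
        rw [hAdef, List.drop_take] at h1
        rw [hBdef, List.drop_take] at h2
        exact h1.trans h2.symm
      have hB'Y : B' = Y.take y₀ := by
        have h4 : B.take y₀ = B' := by rw [hB']; exact List.take_left
        rw [← h4, hYtake y₀ (by omega)]
      have hA'X : A' = X.take x₀ := by
        have h4 : A.take x₀ = A' := by rw [hA']; exact List.take_left
        rw [← h4, hXtake x₀ (by omega)]
      rcases hcases with ⟨A'', a₀, hA'', hb⟩ | ⟨B'', b₀, hB'', hb⟩ |
        ⟨A'', B'', a₀, b₀, hA'', hB'', hb⟩
      · -- deletion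
        have hlA'' : A''.length + 1 = x₀ := by rw [hx₀def, hA'']; simp
        have hA''X : A'' = X.take (x₀ - 1) := by
          have h3 : A = A'' ++ (a₀ :: s) := by rw [hA', hA'']; simp
          have h4 : A.take (x₀ - 1) = A'' := by rw [h3]; exact List.take_left' (by omega)
          rw [← h4, hXtake (x₀-1) (by omega)]
        have hih := ih (by omega) (x₀ - 1) (by omega) y₀ (by omega)
          (by rw [← hA''X, ← hB'Y]; omega)
        have hjj : ((y₀:ℤ) - ((x₀-1:ℕ):ℤ)) = t + 1 := by rw [htdef]; omega
        rw [hjj] at hih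
        have hrange : (t+1).fdiv (a:ℤ) = j ∨ (t+1).fdiv (a:ℤ) = j + 1 := by
          have h5 := hmono t (t+1) (by omega)
          have h6 := hmono (t+1) (t + a) (by omega)
          rw [hadd t] at h6
          omega
        apply key x₀ y₀ (by omega) (by omega) (by omega) hmatch
        rcases hrange with h7 | h7 <;> rw [h7] at hih
        · have h8 := hcoe_succ (x₀ - 1) (d i j) hih
          rw [show x₀ - 1 + 1 = x₀ by omega] at h8
          exact le_trans h8 (le_trans (le_max_left _ _) (le_max_right _ _))
        · have h8 := hcoe_succ (x₀ - 1) (d i (j+1)) hih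
          rw [show x₀ - 1 + 1 = x₀ by omega] at h8
          exact le_trans h8 (le_trans (le_max_right _ _) (le_max_right _ _))
      · -- insertion
        have hlB'' : B''.length + 1 = y₀ := by rw [hy₀def, hB'']; simp
        have hB''Y : B'' = Y.take (y₀ - 1) := by
          have h3 : B = B'' ++ (b₀ :: s) := by rw [hB', hB'']; simp
          have h4 : B.take (y₀ - 1) = B'' := by rw [h3]; exact List.take_left' (by omega)
          rw [← h4, hYtake (y₀-1) (by omega)]
        have hih := ih (by omega) x₀ (by omega) (y₀ - 1) (by omega)
          (by rw [← hA'X, ← hB''Y]; omega)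
        have hjj : (((y₀-1:ℕ):ℤ) - (x₀:ℤ)) = t - 1 := by rw [htdef]; omega
        rw [hjj] at hih
        have hrange : (t-1).fdiv (a:ℤ) = j - 1 ∨ (t-1).fdiv (a:ℤ) = j := by
          have h5 := hmono (t-1) t (by omega)
          have h6 := hmono (t - a) (t-1) (by omega)
          have h7 := hadd (t - a)
          rw [show t - (a:ℤ) + a = t by ring] at h7
          omega
        apply key x₀ y₀ (by omega) (by omega) (by omega) hmatch
        rcases hrange with h7 | h7 <;> rw [h7] at hih
        · exact le_trans hih (le_max_left _ _)
        · have h8 : ((x₀:ℤ) : WithBot ℤ) ≤ d i j + 1 :=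
            le_trans hih (le_add_of_nonneg_right (by norm_num))
          exact le_trans h8 (le_trans (le_max_left _ _) (le_max_right _ _))
      · -- substitution
        have hlA'' : A''.length + 1 = x₀ := by rw [hx₀def, hA'']; simp
        have hlB'' : B''.length + 1 = y₀ := by rw [hy₀def, hB'']; simp
        have hA''X : A'' = X.take (x₀ - 1) := by
          have h3 : A = A'' ++ (a₀ :: s) := by rw [hA', hA'']; simp
          have h4 : A.take (x₀ - 1) = A'' := by rw [h3]; exact List.take_left' (by omega)
          rw [← h4, hXtake (x₀-1) (by omega)]
        have hB''Y : B'' = Y.take (y₀ - 1) := by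
          have h3 : B = B'' ++ (b₀ :: s) := by rw [hB', hB'']; simp
          have h4 : B.take (y₀ - 1) = B'' := by rw [h3]; exact List.take_left' (by omega)
          rw [← h4, hYtake (y₀-1) (by omega)]
        have hih := ih (by omega) (x₀ - 1) (by omega) (y₀ - 1) (by omega)
          (by rw [← hA''X, ← hB''Y]; omega)
        have hjj : (((y₀-1:ℕ):ℤ) - ((x₀-1:ℕ):ℤ)) = t := by rw [htdef]; omega
        rw [hjj] at hih
        apply key x₀ y₀ (by omega) (by omega) (by omega) hmatch
        have h8 := hcoe_succ (x₀ - 1) (d i j) hih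
        rw [show x₀ - 1 + 1 = x₀ by omega] at h8
        exact le_trans h8 (le_trans (le_max_left _ _) (le_max_right _ _))
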